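/- Let 𝒟 be a domain space over ℝⁿ in which every domain satisfies the Disjoint Supports Assumption, has convex ID support supp(D_in), and has ID distribution D_in absolutely continuous with respect to Lebesgue measure. Then for any α ∈ (0,1), OOD detection is non-uniformly learnable for 𝒟 in 𝒫(ℝⁿ) via the Convex Hull Procedure: the hypothesis h_M equal to the convex hull of the first M i.i.d. samples from D_in always has OOD risk 0, and its ID risk D_in(ℝⁿ∖h_M) converges to 0 in probability as M → ∞. -/

import Mathlib

open MeasureTheory ENNReal Set Filter

noncomputable section

/-- A domain over an instance space `X` is a pair of (Borel) measures on `X`: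
the ID distribution and the OOD distribution. -/
structure Domain (X : Type*) [MeasurableSpace X] where
  inD : Measure X
  outD : Measure X

namespace Domain

variable {X : Type*} [MeasurableSpace X]

/-- Both components of the domain are probability measures. -/
def IsProb (D : Domain X) : Prop :=
  IsProbabilityMeasure D.inD ∧ IsProbabilityMeasure D.outD

/-- The risk `R^α_D(h) = (1−α)·D_in(X∖h) + α·D_out(h)` of a hypothesis `h ⊆ X`. -/
def risk (D : Domain X) (α : ℝ) (h : Set X) : ℝ≥0∞ :=
  ENNReal.ofReal (1 - α) * D.inD hᶜ + ENNReal.ofReal α * D.outD h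

/-- The ID risk `R^in_D(h) = D_in(X∖h)`. -/
def inRisk (D : Domain X) (h : Set X) : ℝ≥0∞ := D.inD hᶜ

/-- The OOD risk `R^out_D(h) = D_out(h)`. -/
def outRisk (D : Domain X) (h : Set X) : ℝ≥0∞ := D.outD h

end Domain

/-- The distribution of `N` i.i.d. samples from `μ`. -/
def iidSamples {X : Type*} [MeasurableSpace X] (μ : Measure X) (N : ℕ) :
    Measure (Fin N → X) :=
  Measure.pi fun _ => μ

/-- A (deterministic) learning algorithm: given accuracy `ε`, confidence `δ`, a sample size
and a tuple of samples, it outputs a hypothesis. -/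
abbrev Learner (X : Type*) : Type _ := ℝ → ℝ → (n : ℕ) → (Fin n → X) → Set X

/-- Uniform learnability of OOD detection for the domain space `𝒟` in the hypothesis space `H`,
with a priori known OOD probability `α`: there are a sample-complexity function `N(ε,δ)` and a
learner which, for every `ε, δ ∈ (0,1/2)` and every domain `D ∈ 𝒟`, given `N(ε,δ)` i.i.d.
samples from `D_in`, outputs with probability at least `1−δ` a hypothesis in `H` whose risk is
within `ε` of the best risk achievable in `H`. -/
def UniformlyLearnable {X : Type*} [MeasurableSpace X]
    (𝒟 : Set (Domain X)) (H : Set (Set X)) (α : ℝ) : Prop :=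
  ∃ (N : ℝ → ℝ → ℕ) (A : Learner X),
    (∀ ε δ n S, A ε δ n S ∈ H) ∧
    ∀ ε δ : ℝ, 0 < ε → ε < 1/2 → 0 < δ → δ < 1/2 →
      ∀ D ∈ 𝒟,
        ENNReal.ofReal (1 - δ) ≤
          iidSamples D.inD (N ε δ)
            {S | D.risk α (A ε δ (N ε δ) S) ≤ (⨅ h' ∈ H, D.risk α h') + ENNReal.ofReal ε}

/-- Non-uniform learnability of OOD detection: as in `UniformlyLearnable`, except that the
number of samples the learner needs may depend on the domain `D ∈ 𝒟`. -/
def NonUniformlyLearnable {X : Type*} [MeasurableSpace X]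
    (𝒟 : Set (Domain X)) (H : Set (Set X)) (α : ℝ) : Prop :=
  ∃ A : Learner X,
    (∀ ε δ n S, A ε δ n S ∈ H) ∧
    ∀ ε δ : ℝ, 0 < ε → ε < 1/2 → 0 < δ → δ < 1/2 →
      ∀ D ∈ 𝒟, ∃ N : ℕ,
        ENNReal.ofReal (1 - δ) ≤
          iidSamples D.inD N
            {S | D.risk α (A ε δ N S) ≤ (⨅ h' ∈ H, D.risk α h') + ENNReal.ofReal ε}

/-- The support of a measure on a topological space: the set of points all of whose open
neighbourhoods have positive measure. -/
def msupport {X : Type*} [MeasurableSpace X] [TopologicalSpace X] (μ : Measure X) : Set X :=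
  {x | ∀ U : Set X, IsOpen U → x ∈ U → 0 < μ U}

/-- The Disjoint Supports Assumption. -/
def Domain.DSA {X : Type*} [MeasurableSpace X] [TopologicalSpace X] (D : Domain X) : Prop :=
  msupport D.inD ∩ msupport D.outD = ∅

/-- The instance space `ℝⁿ`. -/
abbrev Euc (n : ℕ) : Type := EuclideanSpace ℝ (Fin n)

/-- The (extended) distance between two sets. -/
def setEDist {X : Type*} [PseudoEMetricSpace X] (A B : Set X) : ℝ≥0∞ :=
  ⨅ x ∈ A, EMetric.infEdist x B

/-- The `τ`-Far Supports Assumption: the supports of the ID and OOD distributions are at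
distance more than `τ`. -/
def Domain.FSA {n : ℕ} (D : Domain (Euc n)) (τ : ℝ) : Prop :=
  ENNReal.ofReal τ < setEDist (msupport D.inD) (msupport D.outD)

/-- The Bounded ID Support Assumption: the support of the ID distribution has diameter
less than `R`. -/
def Domain.BoundedID {n : ℕ} (D : Domain (Euc n)) (R : ℝ) : Prop :=
  EMetric.diam (msupport D.inD) < ENNReal.ofReal R

/-!
The convex hull of points of the convex ID support stays inside that support, which the OOD
distribution does not charge (DSA), so its OOD risk is `0`.

For the ID risk, Tonelli turns the expected ID mass outside the hull of `M` samples into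
`∫ P(x ∉ hull) dD_in(x)`. The boundary of a convex set is Lebesgue-null, so by ContID almost every
`x` is an interior point of the support. Around such an `x` one can place finitely many small
balls, each of positive mass, such that every sample meeting all of them has `x` in its hull: a
functional separating `x` from the hull would be large on one of the balls. Hence
`P(x ∉ hull) ≤ ∑ (1 - D_in(ball))^M → 0`; dominated convergence and Markov's inequality give
convergence in probability of the ID risk to `0`, and so the hull is a non-uniform learner.
-/

open Metric Topology

lemma Domain.risk_le_inRisk_of_outRisk_eq_zero {X : Type*} [MeasurableSpace X] (D : Domain X)
    {α : ℝ} (hα : 0 ≤ α) {h : Set X} (hout : D.outRisk h = 0) : D.risk α h ≤ D.inRisk h := by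
  rw [Domain.risk, show D.outD h = 0 from hout, mul_zero, add_zero, Domain.inRisk]
  exact mul_le_of_le_one_left' (ENNReal.ofReal_le_one.2 (by linarith))

section Support

variable {X : Type*} [MeasurableSpace X] [TopologicalSpace X]

lemma msupport_eq_support (μ : Measure X) : msupport μ = μ.support := by
  rw [Measure.support_eq_forall_isOpen]
  ext x
  exact forall_congr' fun U => ⟨fun h hx hU => h hU hx, fun h hU hx => h hx hU⟩

lemma measure_compl_msupport [HereditarilyLindelofSpace X] (μ : Measure X) :
    μ (msupport μ)ᶜ = 0 :=
  msupport_eq_support μ ▸ Measure.measure_compl_support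

lemma Domain.DSA.outRisk_eq_zero [HereditarilyLindelofSpace X] {D : Domain X} (hD : D.DSA)
    {h : Set X} (hh : h ⊆ msupport D.inD) : D.outRisk h = 0 :=
  measure_mono_null (fun _ hx hx' => hD.subset ⟨hh hx, hx'⟩) (measure_compl_msupport D.outD)

end Support

section ConvexHull

lemma mem_convexHull_range_iff_exists_stdSimplex {ι E : Type*} [Fintype ι] [AddCommGroup E]
    [Module ℝ E] {v : ι → E} {x : E} :
    x ∈ convexHull ℝ (range v) ↔ ∃ w ∈ stdSimplex ℝ ι, ∑ i, w i • v i = x := by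
  classical
  have : range v = Fintype.linearCombination ℝ v '' range fun i => Pi.single i 1 := by
    rw [← range_comp]
    congr 1
    ext i
    simp [Fintype.linearCombination_apply_single]
  rw [this, ← LinearMap.image_convexHull, convexHull_rangle_single_eq_stdSimplex]
  simp [Fintype.linearCombination_apply]

lemma isClosed_setOf_mem_convexHull_range {ι E : Type*} [Fintype ι] [AddCommGroup E]
    [Module ℝ E] [TopologicalSpace E] [IsTopologicalAddGroup E] [ContinuousSMul ℝ E] [T2Space E] :
    IsClosed {p : (ι → E) × E | p.2 ∈ convexHull ℝ (range p.1)} := by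
  have : {p : (ι → E) × E | p.2 ∈ convexHull ℝ (range p.1)} =
      Prod.snd '' {q : stdSimplex ℝ ι × ((ι → E) × E) | ∑ i, q.1.1 i • q.2.1 i = q.2.2} := by
    ext p
    simp [mem_convexHull_range_iff_exists_stdSimplex]
  rw [this]
  refine isClosedMap_snd_of_compactSpace _ (isClosed_eq ?_ (by fun_prop))
  exact continuous_finsetSum _ fun i _ =>
    ((continuous_apply i).comp (continuous_subtype_val.comp continuous_fst)).smul
      ((continuous_apply i).comp (continuous_fst.comp continuous_snd))

variable {E : Type*} [NormedAddCommGroup E] [NormedSpace ℝ E]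

lemma ContinuousLinearMap.exists_mem_closedBall_half_norm_le (f : E →L[ℝ] ℝ) :
    ∃ z ∈ closedBall (0 : E) 1, ‖f‖ / 2 ≤ f z := by
  rcases (norm_nonneg f).eq_or_lt with hf | hf
  · exact ⟨0, by simp, by simp [← hf]⟩
  obtain ⟨z, hz, hfz⟩ := f.exists_lt_apply_of_lt_opNorm (half_lt_self hf)
  rcases le_or_gt 0 (f z) with hpos | hneg
  · exact ⟨z, by simpa using hz.le, by rw [Real.norm_of_nonneg hpos] at hfz; exact hfz.le⟩
  · refine ⟨-z, by simpa using hz.le, ?_⟩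
    rw [Real.norm_eq_abs, abs_of_neg hneg] at hfz
    simpa using hfz.le

lemma exists_finset_balls_forall_mem_convexHull [ProperSpace E] (x : E) {r : ℝ} (hr : 0 < r) :
    ∃ (C : Finset E) (δ : ℝ), 0 < δ ∧ (∀ c ∈ C, ball c δ ⊆ ball x r) ∧
      ∀ T : Set E, T.Finite → (∀ c ∈ C, (T ∩ ball c δ).Nonempty) → x ∈ convexHull ℝ T := by
  obtain ⟨t, ht, htfin, hcover⟩ :=
    finite_cover_balls_of_compact (isCompact_closedBall (0 : E) 1) (by norm_num : (0 : ℝ) < 1 / 4)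
  classical
  refine ⟨htfin.toFinset.image fun u => x + (r / 2) • u, r / 8, by positivity, ?_, ?_⟩
  · simp only [Finset.mem_image, Set.Finite.mem_toFinset]
    rintro _ ⟨u, hu, rfl⟩ y hy
    have hu1 : ‖u‖ ≤ 1 := by simpa using ht hu
    rw [mem_ball, dist_eq_norm] at hy ⊢
    calc ‖y - x‖ = ‖(y - (x + (r / 2) • u)) + (r / 2) • u‖ := by congr 1; abel
      _ ≤ ‖y - (x + (r / 2) • u)‖ + ‖(r / 2) • u‖ := norm_add_le _ _
      _ < r / 8 + r / 2 * 1 := by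
          rw [norm_smul, Real.norm_of_nonneg (by positivity)]
          exact add_lt_add_of_lt_of_le hy (by gcongr)
      _ < r := by linarith
  · intro T hT hmeet
    by_contra hx
    obtain ⟨f, a, hfT, hfx⟩ :=
      _root_.geometric_hahn_banach_closed_point (convex_convexHull ℝ T)
        (hT.isClosed_convexHull (𝕜 := ℝ)) hx
    -- A net point `u` on which `f` is almost maximal pushes the ball around `x + (r/2) u` to the
    -- far side of the separating hyperplane.
    obtain ⟨z, hz, hfz⟩ := f.exists_mem_closedBall_half_norm_le
    obtain ⟨u, hu, hzu⟩ := mem_iUnion₂.1 (hcover hz)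
    obtain ⟨y, hyT, hy⟩ := hmeet _ (Finset.mem_image_of_mem _ (htfin.mem_toFinset.2 hu))
    have hfu : ‖f‖ / 4 ≤ f u := by
      have := (le_abs_self _).trans (f.le_opNorm (z - u))
      rw [map_sub, ← dist_eq_norm] at this
      nlinarith [norm_nonneg f, mem_ball.1 hzu]
    have hfy : -(‖f‖ * (r / 8)) ≤ f (y - (x + (r / 2) • u)) := by
      have := (neg_abs_le _).trans' (neg_le_neg (f.le_opNorm (y - (x + (r / 2) • u))))
      rw [← dist_eq_norm] at this
      nlinarith [norm_nonneg f, mem_ball.1 hy]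
    have : f x ≤ f y := by
      simp only [map_sub, map_add, map_smul, smul_eq_mul] at hfy
      nlinarith
    linarith [hfT y (subset_convexHull ℝ T hyT)]

end ConvexHull

section Sampling

instance iidSamples.instIsProbabilityMeasure {X : Type*} [MeasurableSpace X] (μ : Measure X)
    [IsProbabilityMeasure μ] (M : ℕ) : IsProbabilityMeasure (iidSamples μ M) := by
  unfold iidSamples; infer_instance

lemma ae_iidSamples_forall {X : Type*} [MeasurableSpace X] (μ : Measure X) [SigmaFinite μ]
    {p : X → Prop} (hp : ∀ᵐ x ∂μ, p x) (M : ℕ) :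
    ∀ᵐ S ∂iidSamples μ M, ∀ i, p (S i) :=
  eventually_all.2 fun _ => Measure.tendsto_eval_ae_ae.eventually hp

lemma one_sub_le_prob_of_prob_compl_le {X : Type*} [MeasurableSpace X] {P : Measure X}
    [IsProbabilityMeasure P] {s : Set X} {a : ℝ≥0∞} (h : P sᶜ ≤ a) : 1 - a ≤ P s := by
  rw [tsub_le_iff_right, ← measure_univ (μ := P), ← union_compl_self s]
  exact (measure_union_le s sᶜ).trans (by gcongr)

lemma tendsto_iidSamples_exists_forall_notMem {X ι : Type*} [MeasurableSpace X] (μ : Measure X)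
    [IsProbabilityMeasure μ] (C : Finset ι) {A : ι → Set X} (hAm : ∀ c ∈ C, MeasurableSet (A c))
    (hA : ∀ c ∈ C, 0 < μ (A c)) :
    Tendsto (fun M => iidSamples μ M {S | ∃ c ∈ C, ∀ i, S i ∉ A c}) atTop (𝓝 0) := by
  have hlt : ∀ c ∈ C, μ (A c)ᶜ < 1 := fun c hc => by
    rw [prob_compl_eq_one_sub (hAm c hc)]
    exact ENNReal.sub_lt_self one_ne_top one_ne_zero (hA c hc).ne'
  have hbound : ∀ M, iidSamples μ M {S | ∃ c ∈ C, ∀ i, S i ∉ A c} ≤ ∑ c ∈ C, μ (A c)ᶜ ^ M := by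
    intro M
    calc iidSamples μ M {S | ∃ c ∈ C, ∀ i, S i ∉ A c}
        = iidSamples μ M (⋃ c ∈ C, univ.pi fun _ => (A c)ᶜ) := by
          congr 1; ext S; simp
      _ ≤ ∑ c ∈ C, iidSamples μ M (univ.pi fun _ => (A c)ᶜ) := measure_biUnion_finset_le _ _
      _ = ∑ c ∈ C, μ (A c)ᶜ ^ M := by simp [iidSamples, Measure.pi_pi]
  refine tendsto_of_tendsto_of_tendsto_of_le_of_le tendsto_const_nhds ?_ (fun _ => zero_le) hbound
  simpa using
    tendsto_finsetSum C fun c hc => ENNReal.tendsto_pow_atTop_nhds_zero_of_lt_one (hlt c hc)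

end Sampling

section ConvexHullProcedure

variable {E : Type*} [NormedAddCommGroup E] [NormedSpace ℝ E] [FiniteDimensional ℝ E]
  [MeasurableSpace E] [BorelSpace E] (μ : Measure E)

lemma tendsto_iidSamples_notMem_convexHull [IsProbabilityMeasure μ] {x : E}
    (hx : x ∈ interior (msupport μ)) :
    Tendsto (fun M => iidSamples μ M {S | x ∉ convexHull ℝ (range S)}) atTop (𝓝 0) := by
  obtain ⟨r, hr, hball⟩ := Metric.isOpen_iff.1 isOpen_interior x hx
  obtain ⟨C, δ, hδ, hCball, hforce⟩ := exists_finset_balls_forall_mem_convexHull x hr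
  refine tendsto_of_tendsto_of_tendsto_of_le_of_le tendsto_const_nhds
    (tendsto_iidSamples_exists_forall_notMem μ C (fun _ _ => measurableSet_ball)
      fun c hc => interior_subset (hball (hCball c hc (mem_ball_self hδ))) _ isOpen_ball
        (mem_ball_self hδ))
    (fun _ => zero_le) fun _ => measure_mono fun S hS => ?_
  simp only [mem_ofPred_eq] at hS ⊢
  by_contra! hmiss
  exact hS (hforce _ (finite_range S) fun c hc =>
    let ⟨i, hi⟩ := hmiss c hc; ⟨S i, mem_range_self i, hi⟩)

lemma ae_mem_interior_msupport (ν : Measure E) [ν.IsAddHaarMeasure]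
    (hconv : Convex ℝ (msupport μ)) (hμν : μ ≪ ν) : ∀ᵐ x ∂μ, x ∈ interior (msupport μ) := by
  have hnull : μ ((msupport μ)ᶜ ∪ frontier (msupport μ)) = 0 :=
    measure_union_null (measure_compl_msupport μ) (hμν (hconv.addHaar_frontier ν))
  refine measure_mono_null (fun x hx => ?_) hnull
  by_cases hxs : x ∈ msupport μ
  · exact Or.inr ⟨subset_closure hxs, hx⟩
  · exact Or.inl hxs

lemma measurableSet_setOf_mem_convexHull_range (M : ℕ) :
    MeasurableSet {p : (Fin M → E) × E | p.2 ∈ convexHull ℝ (range p.1)} :=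
  isClosed_setOf_mem_convexHull_range.measurableSet

lemma lintegral_iidSamples_measure_compl_convexHull [IsProbabilityMeasure μ] (M : ℕ) :
    ∫⁻ S, μ (convexHull ℝ (range S))ᶜ ∂iidSamples μ M =
      ∫⁻ x, iidSamples μ M {S | x ∉ convexHull ℝ (range S)} ∂μ :=
  have hB := (measurableSet_setOf_mem_convexHull_range (E := E) M).compl
  (Measure.prod_apply hB).symm.trans (Measure.prod_apply_symm hB)

variable [IsProbabilityMeasure μ] (ν : Measure E) [ν.IsAddHaarMeasure]
  (hconv : Convex ℝ (msupport μ)) (hμν : μ ≪ ν)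
include hconv hμν

lemma tendsto_lintegral_measure_compl_convexHull :
    Tendsto (fun M => ∫⁻ S, μ (convexHull ℝ (range S))ᶜ ∂iidSamples μ M) atTop (𝓝 0) := by
  simp_rw [lintegral_iidSamples_measure_compl_convexHull]
  simpa only [lintegral_zero] using tendsto_lintegral_of_dominated_convergence
    (F := fun M x => iidSamples μ M {S | x ∉ convexHull ℝ (range S)}) (fun _ => 1)
    (fun M => measurable_measure_prodMk_right (measurableSet_setOf_mem_convexHull_range M).compl)
    (fun M => ae_of_all _ fun x => prob_le_one) (by simp)
    ((ae_mem_interior_msupport μ ν hconv hμν).mono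
      fun x hx => tendsto_iidSamples_notMem_convexHull μ hx)

theorem tendsto_iidSamples_measure_compl_convexHull_gt {ε : ℝ} (hε : 0 < ε) :
    Tendsto (fun M => iidSamples μ M {S | ENNReal.ofReal ε < μ (convexHull ℝ (range S))ᶜ})
      atTop (𝓝 0) := by
  have hε' : ENNReal.ofReal ε ≠ 0 := (ENNReal.ofReal_pos.2 hε).ne'
  have hmarkov : ∀ M, iidSamples μ M {S | ENNReal.ofReal ε < μ (convexHull ℝ (range S))ᶜ} ≤
      (∫⁻ S, μ (convexHull ℝ (range S))ᶜ ∂iidSamples μ M) / ENNReal.ofReal ε := fun M =>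
    calc _ ≤ iidSamples μ M {S | ENNReal.ofReal ε ≤ μ (convexHull ℝ (range S))ᶜ} :=
          measure_mono (ofPred_subset_ofPred.2 fun _ => le_of_lt)
      _ ≤ _ := meas_ge_le_lintegral_div (measurable_measure_prodMk_left
          (measurableSet_setOf_mem_convexHull_range M).compl).aemeasurable hε' ofReal_ne_top
  refine tendsto_of_tendsto_of_tendsto_of_le_of_le tendsto_const_nhds ?_ (fun _ => zero_le) hmarkov
  simpa using ENNReal.Tendsto.div_const
    (tendsto_lintegral_measure_compl_convexHull μ ν hconv hμν) (Or.inr hε')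

end ConvexHullProcedure

/-- **OOD detection under DSA, ConvexID and ContID via the Convex Hull Procedure.** If every
domain of `𝒟` has disjoint supports, convex ID support, and absolutely continuous ID
distribution, then OOD detection is non-uniformly learnable for `𝒟`; moreover the convex hull
of the samples always has OOD risk `0`, and its ID risk converges to `0` in probability. -/
theorem convex_hull_nonuniform_learner
    (n : ℕ) (𝒟 : Set (Domain (Euc n))) (hprob : ∀ D ∈ 𝒟, D.IsProb)
    (hdsa : ∀ D ∈ 𝒟, D.DSA)
    (hconv : ∀ D ∈ 𝒟, Convex ℝ (msupport D.inD))
    (hcont : ∀ D ∈ 𝒟, D.inD ≪ MeasureTheory.volume)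
    (α : ℝ) (hα : α ∈ Set.Ioo (0 : ℝ) 1) :
    NonUniformlyLearnable 𝒟 Set.univ α ∧
    (∀ D ∈ 𝒟, ∀ (M : ℕ) (S : Fin M → Euc n), (∀ i, S i ∈ msupport D.inD) →
      D.outRisk (convexHull ℝ (Set.range S)) = 0) ∧
    (∀ D ∈ 𝒟, ∀ ε : ℝ, 0 < ε →
      Filter.Tendsto
        (fun M => iidSamples D.inD M
          {S | ENNReal.ofReal ε < D.inRisk (convexHull ℝ (Set.range S))})
        Filter.atTop (nhds 0)) := by
  have hout : ∀ D ∈ 𝒟, ∀ (M : ℕ) (S : Fin M → Euc n), (∀ i, S i ∈ msupport D.inD) →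
      D.outRisk (convexHull ℝ (range S)) = 0 := fun D hD _ _ hS =>
    (hdsa D hD).outRisk_eq_zero (convexHull_min (range_subset_iff.2 hS) (hconv D hD))
  have hin : ∀ D ∈ 𝒟, ∀ ε : ℝ, 0 < ε → Tendsto (fun M => iidSamples D.inD M
      {S | ENNReal.ofReal ε < D.inRisk (convexHull ℝ (range S))}) atTop (𝓝 0) := fun D hD _ hε =>
    have := (hprob D hD).1
    tendsto_iidSamples_measure_compl_convexHull_gt D.inD volume (hconv D hD) (hcont D hD) hε
  refine ⟨⟨fun _ _ _ S => convexHull ℝ (range S), fun _ _ _ _ => mem_univ _, ?_⟩, hout, hin⟩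
  intro ε δ hε _ hδ _ D hD
  have := (hprob D hD).1
  obtain ⟨N, hN⟩ := ((hin D hD ε hε).eventually_lt_const (ENNReal.ofReal_pos.2 hδ)).exists
  refine ⟨N, ?_⟩
  rw [ENNReal.ofReal_sub _ hδ.le, ENNReal.ofReal_one]
  refine one_sub_le_prob_of_prob_compl_le ((measure_mono_ae ?_).trans hN.le)
  filter_upwards [ae_iidSamples_forall D.inD (measure_compl_msupport D.inD) N] with S hS hbad
  refine lt_of_not_ge fun hle => hbad ?_
  exact ((D.risk_le_inRisk_of_outRisk_eq_zero hα.1.le (hout D hD N S hS)).trans hle).trans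
    le_add_self
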